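/- arXiv:2208.12867 — 3 statements merged into one kernel-verified Lean document; each statement's English description precedes it below -/
import Mathlib

section
/- Under the assumptions of the previous item, with additionally f(x,·) differentiable for each x and ∂_r f Lipschitz continuous in each variable uniformly in the other, the map F(φ)(x) = f(x,φ(x)) satisfies a locally Lipschitz estimate in Hölder norm: for every φ₁, φ₂ ∈ C_b^θ(H), ‖F(φ₁) - F(φ₂)‖_θ ≤ C (1 + ‖φ₁‖_θ + ‖φ₂‖_θ) ‖φ₁ - φ₂‖_θ. -/
/-!
The double difference `(f x a₁ - f x a₂) - (f y b₁ - f y b₂)` is the increment over `[0, 1]` of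
`s ↦ f x (a₂ + s (a₁ - a₂)) - f y (b₂ + s (b₁ - b₂))`; by the mean value inequality it is bounded
by the derivative `(a₁ - a₂) • (f' x u - f' y v) + ((a₁ - a₂) - (b₁ - b₂)) • f' y v`. The first
term is small because `f'` is `θ`-Hölder in `x` (being Lipschitz and bounded) and Lipschitz in
`r`, with `|u - v|` controlled by the Hölder seminorms of `φ₁, φ₂`; the second because
`‖f'‖ ≤ L`, `f` being `L`-Lipschitz in `r`.
-/

open Set

section

variable {E : Type*} [NormedAddCommGroup E] [NormedSpace ℝ E]

theorem norm_sub_sub_sub_le_of_hasDerivAt {g h g' h' : ℝ → E}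
    (hg : ∀ r, HasDerivAt g (g' r) r) (hh : ∀ r, HasDerivAt h (h' r) r) {a₁ a₂ b₁ b₂ C : ℝ}
    (hC : ∀ s ∈ Icc (0 : ℝ) 1,
      ‖(a₁ - a₂) • g' (a₂ + s * (a₁ - a₂)) - (b₁ - b₂) • h' (b₂ + s * (b₁ - b₂))‖ ≤ C) :
    ‖(g a₁ - g a₂) - (h b₁ - h b₂)‖ ≤ C := by
  have hderiv : ∀ s ∈ Icc (0 : ℝ) 1,
      HasDerivWithinAt (fun s => g (a₂ + s * (a₁ - a₂)) - h (b₂ + s * (b₁ - b₂)))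
        ((a₁ - a₂) • g' (a₂ + s * (a₁ - a₂)) - (b₁ - b₂) • h' (b₂ + s * (b₁ - b₂)))
        (Icc 0 1) s := fun s _ =>
    (((hg _).scomp s ((hasDerivAt_mul_const _).const_add a₂)).sub
      ((hh _).scomp s ((hasDerivAt_mul_const _).const_add b₂))).hasDerivWithinAt
  convert norm_image_sub_le_of_norm_deriv_le_segment_01' hderiv
    (fun s hs => hC s (Ico_subset_Icc_self hs)) using 2
  simp only [zero_mul, add_zero, one_mul, add_sub_cancel]
  abel

theorem norm_smul_sub_smul_le (p q : ℝ) (A B : E) :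
    ‖p • A - q • B‖ ≤ |p| * ‖A - B‖ + |p - q| * ‖B‖ := by
  calc ‖p • A - q • B‖ = ‖p • (A - B) + (p - q) • B‖ := by
        rw [smul_sub, sub_smul]; abel_nf
    _ ≤ |p| * ‖A - B‖ + |p - q| * ‖B‖ := by
        simpa only [norm_smul, Real.norm_eq_abs] using norm_add_le (p • (A - B)) ((p - q) • B)

end

theorem abs_add_mul_sub_sub_add_mul_sub_le {a₁ a₂ b₁ b₂ s : ℝ} (hs : s ∈ Icc (0 : ℝ) 1) :
    |(a₂ + s * (a₁ - a₂)) - (b₂ + s * (b₁ - b₂))| ≤ |a₁ - b₁| + |a₂ - b₂| := by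
  obtain ⟨hs₀, hs₁⟩ := hs
  calc |(a₂ + s * (a₁ - a₂)) - (b₂ + s * (b₁ - b₂))| = |s * (a₁ - b₁) + (1 - s) * (a₂ - b₂)| := by
        ring_nf
    _ ≤ s * |a₁ - b₁| + (1 - s) * |a₂ - b₂| := by
        refine (abs_add_le _ _).trans_eq ?_
        rw [abs_mul, abs_mul, abs_of_nonneg hs₀, abs_of_nonneg (sub_nonneg.2 hs₁)]
    _ ≤ |a₁ - b₁| + |a₂ - b₂| := by
        nlinarith [abs_nonneg (a₁ - b₁), abs_nonneg (a₂ - b₂)]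

theorem le_mul_rpow_of_le_mul_of_le {a K d θ : ℝ} (hK : 0 ≤ K) (hd : 0 ≤ d) (hθ₀ : 0 ≤ θ)
    (hθ₁ : θ ≤ 1) (h_mul : a ≤ K * d) (h_const : a ≤ K) : a ≤ K * d ^ θ := by
  rcases le_or_gt d 1 with hd₁ | hd₁
  · exact h_mul.trans (mul_le_mul_of_nonneg_left (Real.self_le_rpow_of_le_one hd hd₁ hθ₁) hK)
  · exact h_const.trans (le_mul_of_one_le_right hK (Real.one_le_rpow hd₁.le hθ₀))

theorem LipschitzWith.norm_sub_le_mul_rpow {H E : Type*} [SeminormedAddCommGroup H]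
    [SeminormedAddCommGroup E] {g : H → E} {L : NNReal} {M θ : ℝ} (hg : LipschitzWith L g)
    (hM : ∀ x, ‖g x‖ ≤ M) (hθ₀ : 0 ≤ θ) (hθ₁ : θ ≤ 1) (x y : H) :
    ‖g x - g y‖ ≤ (L + 2 * M) * ‖x - y‖ ^ θ := by
  have hM₀ : 0 ≤ M := (norm_nonneg _).trans (hM x)
  refine le_mul_rpow_of_le_mul_of_le (by positivity) (norm_nonneg _) hθ₀ hθ₁ ?_ ?_
  · refine (hg.norm_sub_le x y).trans ?_
    nlinarith [norm_nonneg (x - y)]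
  · calc ‖g x - g y‖ ≤ ‖g x‖ + ‖g y‖ := _root_.norm_sub_le _ _
      _ ≤ L + 2 * M := by linarith [hM x, hM y, L.coe_nonneg]

section Nemytskii

variable {H E : Type*} [SeminormedAddCommGroup H] [NormedAddCommGroup E]
  {f f' : H → ℝ → E} {L : NNReal} {θ : ℝ}

theorem norm_sub_le_mul_rpow_add_mul_abs (hθ₀ : 0 ≤ θ) (hθ₁ : θ ≤ 1)
    (hf'x : ∀ r, LipschitzWith L (fun x => f' x r)) (hf'r : ∀ x, LipschitzWith L (f' x))
    (hf'_le : ∀ x r, ‖f' x r‖ ≤ L) (x y : H) (u v : ℝ) :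
    ‖f' x u - f' y v‖ ≤ 3 * L * ‖x - y‖ ^ θ + L * |u - v| := by
  calc ‖f' x u - f' y v‖ ≤ ‖f' x u - f' y u‖ + ‖f' y u - f' y v‖ :=
        norm_sub_le_norm_sub_add_norm_sub _ _ _
    _ ≤ (L + 2 * L) * ‖x - y‖ ^ θ + L * ‖u - v‖ :=
        add_le_add ((hf'x u).norm_sub_le_mul_rpow (fun x => hf'_le x u) hθ₀ hθ₁ x y)
          ((hf'r y).norm_sub_le u v)
    _ = 3 * L * ‖x - y‖ ^ θ + L * |u - v| := by rw [Real.norm_eq_abs]; ring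

theorem norm_sub_sub_sub_le_mul_rpow [NormedSpace ℝ E] (hθ₀ : 0 ≤ θ) (hθ₁ : θ ≤ 1)
    (hderiv : ∀ x r, HasDerivAt (f x) (f' x r) r) (hfr : ∀ x, LipschitzWith L (f x))
    (hf'x : ∀ r, LipschitzWith L (fun x => f' x r)) (hf'r : ∀ x, LipschitzWith L (f' x))
    {x y : H} {a₁ a₂ b₁ b₂ B₁ B₂ D : ℝ} (hD : 0 ≤ D)
    (h₁ : |a₁ - b₁| ≤ B₁ * ‖x - y‖ ^ θ) (h₂ : |a₂ - b₂| ≤ B₂ * ‖x - y‖ ^ θ)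
    (h_sup : |a₁ - a₂| ≤ D) (h_hol : |(a₁ - a₂) - (b₁ - b₂)| ≤ D * ‖x - y‖ ^ θ) :
    ‖(f x a₁ - f x a₂) - (f y b₁ - f y b₂)‖ ≤ L * (4 + B₁ + B₂) * D * ‖x - y‖ ^ θ := by
  have hf'_le : ∀ x r, ‖f' x r‖ ≤ L := fun x r => (hderiv x r).le_of_lipschitz (hfr x)
  refine norm_sub_sub_sub_le_of_hasDerivAt (hderiv x) (hderiv y) fun s hs => ?_
  set t := ‖x - y‖ ^ θ
  have ht : 0 ≤ t := by positivity
  set u := a₂ + s * (a₁ - a₂)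
  set v := b₂ + s * (b₁ - b₂)
  have huv : |u - v| ≤ (B₁ + B₂) * t :=
    (abs_add_mul_sub_sub_add_mul_sub_le hs).trans (by linarith)
  have hdiff := norm_sub_le_mul_rpow_add_mul_abs hθ₀ hθ₁ hf'x hf'r hf'_le x y u v
  calc ‖(a₁ - a₂) • f' x u - (b₁ - b₂) • f' y v‖
      ≤ |a₁ - a₂| * ‖f' x u - f' y v‖ + |(a₁ - a₂) - (b₁ - b₂)| * ‖f' y v‖ :=
        norm_smul_sub_smul_le _ _ _ _
    _ ≤ D * (3 * L * t + L * ((B₁ + B₂) * t)) + D * t * L := by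
        gcongr
        · exact hdiff.trans (by gcongr)
        · exact hf'_le y v
    _ = L * (4 + B₁ + B₂) * D * t := by ring

end Nemytskii

theorem stmt6_general {H E : Type*} [NormedAddCommGroup H]
    [NormedAddCommGroup E] [NormedSpace ℝ E]
    (θ : ℝ) (hθ : θ ∈ Set.Ioo (0 : ℝ) 1)
    (f f' : H → ℝ → E) (L : NNReal)
    (hfr : ∀ x : H, LipschitzWith L (f x))
    (hderiv : ∀ (x : H) (r : ℝ), HasDerivAt (f x) (f' x r) r)
    (hf'x : ∀ r : ℝ, LipschitzWith L (fun x => f' x r))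
    (hf'r : ∀ x : H, LipschitzWith L (f' x)) :
    ∃ C : ℝ, 0 < C ∧
      ∀ (φ₁ φ₂ : H → ℝ) (B1 B2 D : ℝ),
        0 ≤ B1 → 0 ≤ B2 → 0 ≤ D →
        (∀ x, |φ₁ x| ≤ B1) → (∀ x y, |φ₁ x - φ₁ y| ≤ B1 * ‖x - y‖ ^ θ) →
        (∀ x, |φ₂ x| ≤ B2) → (∀ x y, |φ₂ x - φ₂ y| ≤ B2 * ‖x - y‖ ^ θ) →
        (∀ x, |φ₁ x - φ₂ x| ≤ D) →
        (∀ x y, |(φ₁ x - φ₂ x) - (φ₁ y - φ₂ y)| ≤ D * ‖x - y‖ ^ θ) →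
        (∀ x, ‖f x (φ₁ x) - f x (φ₂ x)‖ ≤ C * (1 + B1 + B2) * D) ∧
        (∀ x y, ‖(f x (φ₁ x) - f x (φ₂ x)) - (f y (φ₁ y) - f y (φ₂ y))‖
            ≤ C * (1 + B1 + B2) * D * ‖x - y‖ ^ θ) := by
  obtain ⟨hθ₀, hθ₁⟩ := hθ
  refine ⟨4 * L + 1, by positivity, fun φ₁ φ₂ B1 B2 D hB1 hB2 hD _ hφ₁ _ hφ₂ h_sup h_hol => ?_⟩
  have hL : (0 : ℝ) ≤ L := L.coe_nonneg
  have hC : L * (4 + B1 + B2) ≤ (4 * L + 1) * (1 + B1 + B2) := by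
    nlinarith [mul_nonneg hL hB1, mul_nonneg hL hB2]
  refine ⟨fun x => ?_, fun x y => ?_⟩
  · calc ‖f x (φ₁ x) - f x (φ₂ x)‖ ≤ L * |φ₁ x - φ₂ x| := (hfr x).norm_sub_le _ _
      _ ≤ L * (4 + B1 + B2) * D := by
          rw [mul_assoc]
          exact mul_le_mul_of_nonneg_left ((h_sup x).trans (by nlinarith)) hL
      _ ≤ (4 * L + 1) * (1 + B1 + B2) * D := by gcongr
  · calc _ ≤ L * (4 + B1 + B2) * D * ‖x - y‖ ^ θ :=
          norm_sub_sub_sub_le_mul_rpow hθ₀.le hθ₁.le hderiv hfr hf'x hf'r hD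
            (hφ₁ x y) (hφ₂ x y) (h_sup x) (h_hol x y)
      _ ≤ (4 * L + 1) * (1 + B1 + B2) * D * ‖x - y‖ ^ θ := by gcongr

/-- Local Lipschitz estimate in Hölder norm for the Nemytskii map
`F(φ)(x) = f(x, φ(x))`:
`‖F(φ₁) - F(φ₂)‖_θ ≤ C (1 + ‖φ₁‖_θ + ‖φ₂‖_θ) ‖φ₁ - φ₂‖_θ`.
Here `L₁(H)` is modelled by an abstract Banach space `E`, and the `C_b^θ` norms
are expressed through the corresponding sup- and Hölder-bounds. -/
theorem stmt6 {H E : Type*} [NormedAddCommGroup H] [InnerProductSpace ℝ H] [CompleteSpace H]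
    [NormedAddCommGroup E] [NormedSpace ℝ E]
    (θ : ℝ) (hθ : θ ∈ Set.Ioo (0 : ℝ) 1)
    (f f' : H → ℝ → E) (L : NNReal) (c0 : ℝ) (hc0 : 0 ≤ c0)
    (hfx : ∀ r : ℝ, LipschitzWith L (fun x => f x r))
    (hfr : ∀ x : H, LipschitzWith L (f x))
    (hgrowth : ∀ (x : H) (r : ℝ), ‖f x r‖ ≤ c0 * (1 + |r|))
    (hderiv : ∀ (x : H) (r : ℝ), HasDerivAt (f x) (f' x r) r)
    (hf'x : ∀ r : ℝ, LipschitzWith L (fun x => f' x r))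
    (hf'r : ∀ x : H, LipschitzWith L (f' x)) :
    ∃ C : ℝ, 0 < C ∧
      ∀ (φ₁ φ₂ : H → ℝ) (B1 B2 D : ℝ),
        0 ≤ B1 → 0 ≤ B2 → 0 ≤ D →
        (∀ x, |φ₁ x| ≤ B1) → (∀ x y, |φ₁ x - φ₁ y| ≤ B1 * ‖x - y‖ ^ θ) →
        (∀ x, |φ₂ x| ≤ B2) → (∀ x y, |φ₂ x - φ₂ y| ≤ B2 * ‖x - y‖ ^ θ) →
        (∀ x, |φ₁ x - φ₂ x| ≤ D) →
        (∀ x y, |(φ₁ x - φ₂ x) - (φ₁ y - φ₂ y)| ≤ D * ‖x - y‖ ^ θ) →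
        (∀ x, ‖f x (φ₁ x) - f x (φ₂ x)‖ ≤ C * (1 + B1 + B2) * D) ∧
        (∀ x y, ‖(f x (φ₁ x) - f x (φ₂ x)) - (f y (φ₁ y) - f y (φ₂ y))‖
            ≤ C * (1 + B1 + B2) * D * ‖x - y‖ ^ θ) :=
  stmt6_general θ hθ f f' L hfr hderiv hf'x hf'r
end

section
/- Let O ⊂ ℝ^d be a bounded domain, H = L²(O) with orthonormal basis {e_i} ⊂ L^∞(O), and λ_i ≥ 0 with Σ_i λ_i ‖e_i‖_{L^∞} < ∞. Let 𝔣_i : ℝ × ℝ → ℝ be functions that are Lipschitz continuous in the first variable, uniformly in the second variable and in i, with Lipschitz constant L. For x ∈ H, r ∈ ℝ define f(x,r) ∈ L(H) by [f(x,r)y](ξ) = Σ_i 𝔣_i(x(ξ), r) λ_i ⟨y, e_i⟩ e_i(ξ). Then for each fixed r the map x ↦ f(x,r) is Lipschitz from H to the trace-class operators L₁(H), with Lipschitz constant at most c·L·Σ_i λ_i ‖e_i‖_{L^∞}, uniformly in r. -/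
open MeasureTheory
open scoped RealInnerProductSpace

/-!
The difference `F x r - F y r` sends `e j` to `lam j • (g j x r - g j y r)` and vanishes on the
orthogonal complement of the `e i`, so it is the nuclear operator
`z ↦ Σ_j ⟪z, lam j • e j⟫ • (g j x r - g j y r)`. Since the series defining `F` need not
converge absolutely, this identification is made by a density argument rather than by
subtracting the series termwise. The Lipschitz bound on `𝔣 j` and `|e j| ≤ E j` give
`‖g j x r - g j y r‖ ≤ L E_j ‖x - y‖`, hence a nuclear norm at most `L ‖x - y‖ Σ_j lam j E_j`.
-/

/-- Nuclear operators on a Hilbert space: `A x = Σ_n ⟪x, g_n⟫ h_n` with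
`Σ_n ‖g_n‖‖h_n‖ < ∞`. -/
def IsNuclearOp {H : Type*} [NormedAddCommGroup H] [InnerProductSpace ℝ H]
    (A : H →L[ℝ] H) : Prop :=
  ∃ g h : ℕ → H, Summable (fun n => ‖g n‖ * ‖h n‖) ∧
    ∀ x : H, A x = ∑' n, ⟪x, g n⟫ • h n

/-- The nuclear (trace-class) norm, as the infimum over nuclear representations. -/
noncomputable def nuclearNorm {H : Type*} [NormedAddCommGroup H] [InnerProductSpace ℝ H]
    (A : H →L[ℝ] H) : ℝ :=
  sInf { C : ℝ | ∃ g h : ℕ → H, Summable (fun n => ‖g n‖ * ‖h n‖) ∧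
    (∀ x : H, A x = ∑' n, ⟪x, g n⟫ • h n) ∧ C = ∑' n, ‖g n‖ * ‖h n‖ }

section InnerProductSpace

variable {E : Type*} [NormedAddCommGroup E] [InnerProductSpace ℝ E]

lemma nuclearNorm_le_tsum (A : E →L[ℝ] E) (u v : ℕ → E)
    (hs : Summable fun n => ‖u n‖ * ‖v n‖) (hA : ∀ z, A z = ∑' n, ⟪z, u n⟫ • v n) :
    nuclearNorm A ≤ ∑' n, ‖u n‖ * ‖v n‖ := by
  refine csInf_le ⟨0, ?_⟩ ⟨u, v, hs, hA, rfl⟩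
  rintro _ ⟨-, -, -, -, rfl⟩
  exact tsum_nonneg fun n => by positivity

lemma exists_continuousLinearMap_eq_tsum_inner_smul [CompleteSpace E] (u v : ℕ → E)
    (hs : Summable fun n => ‖u n‖ * ‖v n‖) :
    ∃ B : E →L[ℝ] E, ∀ z, B z = ∑' n, ⟪z, u n⟫ • v n := by
  set A : ℕ → E →L[ℝ] E := fun n => (innerSL ℝ (u n)).smulRight (v n)
  have hA : Summable A := by
    refine Summable.of_norm (hs.of_nonneg_of_le (fun n => norm_nonneg _) fun n => ?_)
    rw [ContinuousLinearMap.norm_smulRight_apply, innerSL_apply_norm]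
  refine ⟨∑' n, A n, fun z => ?_⟩
  simpa [A, real_inner_comm] using (ContinuousLinearMap.apply ℝ E z).map_tsum hA

lemma ContinuousLinearMap.ext_of_orthogonal [CompleteSpace E] {F : Type*}
    [NormedAddCommGroup F] [NormedSpace ℝ F] {ι : Type*} (e : ι → E) {T S : E →L[ℝ] F}
    (he : ∀ i, T (e i) = S (e i)) (horth : ∀ v, (∀ i, ⟪v, e i⟫ = 0) → T v = S v) :
    T = S := by
  set K := (Submodule.span ℝ (Set.range e)).topologicalClosure
  have hK : K ≤ (T - S).ker := by
    refine Submodule.topologicalClosure_minimal _ ?_ (T - S).isClosed_ker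
    rw [Submodule.span_le]
    rintro _ ⟨i, rfl⟩
    simp [he i]
  have hKperp : Kᗮ ≤ (T - S).ker := fun v hv => by
    have hv' := (Submodule.mem_orthogonal' K v).mp hv
    simpa [sub_eq_zero] using horth v fun i =>
      hv' _ (Submodule.le_topologicalClosure _ (Submodule.subset_span ⟨i, rfl⟩))
  have : CompleteSpace K := (Submodule.isClosed_topologicalClosure _).completeSpace_coe
  ext z
  have hz : z ∈ (T - S).ker :=
    (sup_le hK hKperp) (K.sup_orthogonal_of_hasOrthogonalProjection ▸ Submodule.mem_top)
  simpa [sub_eq_zero] using hz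

lemma Orthonormal.tsum_mul_inner_smul {e : ℕ → E} (he : Orthonormal ℝ e) {F : Type*}
    [AddCommGroup F] [Module ℝ F] [TopologicalSpace F] (c : ℕ → ℝ) (w : ℕ → F) (j : ℕ) :
    ∑' i, (c i * ⟪e j, e i⟫) • w i = c j • w j := by
  rw [tsum_eq_single j fun i hi => by rw [he.inner_eq_zero (Ne.symm hi), mul_zero, zero_smul]]
  rw [real_inner_self_eq_norm_sq, he.1 j]
  simp

lemma nuclearNorm_le_of_apply_orthonormal [CompleteSpace E] {e : ℕ → E} (he : Orthonormal ℝ e)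
    (T : E →L[ℝ] E) {lam : ℕ → ℝ} (hlam : ∀ n, 0 ≤ lam n) (w : ℕ → E)
    (hs : Summable fun n => lam n * ‖w n‖) (hTe : ∀ j, T (e j) = lam j • w j)
    (hT : ∀ v, (∀ i, ⟪v, e i⟫ = 0) → T v = 0) :
    nuclearNorm T ≤ ∑' n, lam n * ‖w n‖ := by
  have hnorm : ∀ n, ‖lam n • e n‖ = lam n := fun n => by
    rw [norm_smul, he.1 n, mul_one, Real.norm_of_nonneg (hlam n)]
  have hs' : Summable fun n => ‖lam n • e n‖ * ‖w n‖ := by simpa only [hnorm] using hs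
  obtain ⟨B, hB⟩ := exists_continuousLinearMap_eq_tsum_inner_smul _ _ hs'
  have hTB : T = B := by
    refine ContinuousLinearMap.ext_of_orthogonal e (fun j => ?_) (fun v hv => ?_)
    · simp only [hTe, hB, real_inner_smul_right, he.tsum_mul_inner_smul]
    · simp [hT v hv, hB, real_inner_smul_right, hv]
  simpa only [hnorm] using nuclearNorm_le_tsum T _ _ hs' (hTB ▸ hB)

end InnerProductSpace

lemma Lp.norm_sub_le_of_lipschitzWith_mul {O : Type*} [MeasurableSpace O] {μ : Measure O}
    {p : ENNReal} {K : NNReal} {φ : ℝ → ℝ} (hφ : LipschitzWith K φ) {a : O → ℝ} {C : ℝ}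
    (ha : ∀ᵐ ξ ∂μ, |a ξ| ≤ C) {x y u v : Lp ℝ p μ}
    (hu : (u : O → ℝ) =ᵐ[μ] fun ξ => φ (x ξ) * a ξ)
    (hv : (v : O → ℝ) =ᵐ[μ] fun ξ => φ (y ξ) * a ξ) :
    ‖u - v‖ ≤ K * C * ‖x - y‖ := by
  refine Lp.norm_le_mul_norm_of_ae_le_mul ?_
  filter_upwards [Lp.coeFn_sub u v, Lp.coeFn_sub x y, hu, hv, ha] with ξ huv hxy hu hv ha
  have hφξ : |φ (x ξ) - φ (y ξ)| ≤ K * |x ξ - y ξ| := by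
    simpa only [Real.dist_eq] using hφ.dist_le_mul (x ξ) (y ξ)
  rw [huv, hxy, Pi.sub_apply, Pi.sub_apply, hu, hv, ← sub_mul, Real.norm_eq_abs,
    Real.norm_eq_abs, abs_mul]
  calc |φ (x ξ) - φ (y ξ)| * |a ξ| ≤ (K * |x ξ - y ξ|) * C :=
        mul_le_mul hφξ ha (abs_nonneg _) (by positivity)
    _ = K * C * |x ξ - y ξ| := by ring

theorem stmt13_general {O : Type*} [MeasurableSpace O] (μ : Measure O)
    (e : ℕ → Lp ℝ 2 μ) (he : Orthonormal ℝ e)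
    (E lam : ℕ → ℝ)
    (hesup : ∀ i, ∀ᵐ ξ ∂μ, |(e i : O → ℝ) ξ| ≤ E i)
    (hlam : ∀ i, 0 ≤ lam i) (hsum : Summable (fun i => lam i * E i))
    (L : NNReal) (𝔣 : ℕ → ℝ → ℝ → ℝ)
    (hLip : ∀ (i : ℕ) (r : ℝ), LipschitzWith L (fun s => 𝔣 i s r))
    (g : ℕ → Lp ℝ 2 μ → ℝ → Lp ℝ 2 μ)
    (hg : ∀ (i : ℕ) (x : Lp ℝ 2 μ) (r : ℝ),
      (g i x r : O → ℝ) =ᵐ[μ] fun ξ => 𝔣 i ((x : O → ℝ) ξ) r * (e i : O → ℝ) ξ)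
    (F : Lp ℝ 2 μ → ℝ → (Lp ℝ 2 μ →L[ℝ] Lp ℝ 2 μ))
    (hF : ∀ (x : Lp ℝ 2 μ) (r : ℝ) (y : Lp ℝ 2 μ),
      F x r y = ∑' i, (lam i * ⟪y, e i⟫) • g i x r) :
    ∃ c : ℝ, 0 < c ∧ ∀ (r : ℝ) (x y : Lp ℝ 2 μ),
      nuclearNorm (F x r - F y r) ≤ c * (L : ℝ) * (∑' i, lam i * E i) * ‖x - y‖ := by
  refine ⟨1, one_pos, fun r x y => ?_⟩
  have hle : ∀ i, lam i * ‖g i x r - g i y r‖ ≤ (L * ‖x - y‖) * (lam i * E i) := fun i =>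
    calc lam i * ‖g i x r - g i y r‖ ≤ lam i * (L * E i * ‖x - y‖) :=
          mul_le_mul_of_nonneg_left
            (Lp.norm_sub_le_of_lipschitzWith_mul (hLip i r) (hesup i) (hg i x r) (hg i y r))
            (hlam i)
      _ = (L * ‖x - y‖) * (lam i * E i) := by ring
  have hs : Summable fun i => lam i * ‖g i x r - g i y r‖ :=
    (hsum.mul_left _).of_nonneg_of_le (fun i => mul_nonneg (hlam i) (norm_nonneg _)) hle
  calc nuclearNorm (F x r - F y r) ≤ ∑' i, lam i * ‖g i x r - g i y r‖ := by
        refine nuclearNorm_le_of_apply_orthonormal he _ hlam _ hs (fun j => ?_) (fun v hv => ?_)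
        · simp only [sub_apply, hF, he.tsum_mul_inner_smul, smul_sub]
        · simp [hF, hv]
    _ ≤ ∑' i, (L * ‖x - y‖) * (lam i * E i) := hs.tsum_le_tsum hle (hsum.mul_left _)
    _ = 1 * L * (∑' i, lam i * E i) * ‖x - y‖ := by rw [tsum_mul_left]; ring

/-- On `H = L²(O)`, with an orthonormal system `e_i ∈ L^∞(O)`, weights `λ_i ≥ 0` with
`Σ λ_i ‖e_i‖_∞ < ∞`, and `𝔣_i` Lipschitz in the first variable uniformly in the
second variable and in `i`, the operator
`f(x,r) y = Σ_i 𝔣_i(x(·), r) λ_i ⟪y, e_i⟫ e_i(·)` is, for each fixed `r`, Lipschitz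
in `x` from `H` to the trace-class operators, with Lipschitz constant at most
`c L Σ_i λ_i ‖e_i‖_∞`.  The pointwise products `𝔣_i(x(·),r) e_i(·)` are represented
by the elements `g i x r` of `H`, and the operator `f(x,r)` by `F x r`. -/
theorem stmt13 {O : Type*} [MeasurableSpace O] (μ : Measure O)
    (e : ℕ → Lp ℝ 2 μ) (he : Orthonormal ℝ e)
    (E lam : ℕ → ℝ) (hE : ∀ i, 0 ≤ E i)
    (hesup : ∀ i, ∀ᵐ ξ ∂μ, |(e i : O → ℝ) ξ| ≤ E i)
    (hlam : ∀ i, 0 ≤ lam i) (hsum : Summable (fun i => lam i * E i))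
    (L : NNReal) (𝔣 : ℕ → ℝ → ℝ → ℝ)
    (hLip : ∀ (i : ℕ) (r : ℝ), LipschitzWith L (fun s => 𝔣 i s r))
    (g : ℕ → Lp ℝ 2 μ → ℝ → Lp ℝ 2 μ)
    (hg : ∀ (i : ℕ) (x : Lp ℝ 2 μ) (r : ℝ),
      (g i x r : O → ℝ) =ᵐ[μ] fun ξ => 𝔣 i ((x : O → ℝ) ξ) r * (e i : O → ℝ) ξ)
    (F : Lp ℝ 2 μ → ℝ → (Lp ℝ 2 μ →L[ℝ] Lp ℝ 2 μ))
    (hF : ∀ (x : Lp ℝ 2 μ) (r : ℝ) (y : Lp ℝ 2 μ),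
      F x r y = ∑' i, (lam i * ⟪y, e i⟫) • g i x r) :
    ∃ c : ℝ, 0 < c ∧ ∀ (r : ℝ) (x y : Lp ℝ 2 μ),
      nuclearNorm (F x r - F y r) ≤ c * (L : ℝ) * (∑' i, lam i * E i) * ‖x - y‖ :=
  stmt13_general μ e he E lam hesup hlam hsum L 𝔣 hLip g hg F hF
end

section
/- Let ρ ∈ (0, 1/4) and λ > 0. Then there is a constant c depending only on ρ and λ such that ∫₀^t ((t-s)∧1)^{-1/2} e^{-λ(t-s)} (s∧1)^{-(ρ+1/2)} ds ≤ c (t∧1)^{-ρ} for all t > 0. -/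
open MeasureTheory Set Real

private lemma bound_int {a b : ℝ} (hab : a ≤ b) {f g : ℝ → ℝ}
    (hfm : AEStronglyMeasurable f (volume.restrict (Set.Ioc a b)))
    (h0 : ∀ s ∈ Set.Ioc a b, 0 ≤ f s)
    (hle : ∀ s ∈ Set.Ioc a b, f s ≤ g s)
    (hg : IntervalIntegrable g volume a b) :
    IntervalIntegrable f volume a b ∧ (∫ s in a..b, f s) ≤ ∫ s in a..b, g s := by
  have hgi : IntegrableOn g (Set.Ioc a b) :=
    (intervalIntegrable_iff_integrableOn_Ioc_of_le hab).mp hg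
  have hfi : IntegrableOn f (Set.Ioc a b) := by
    refine Integrable.mono hgi hfm ?_
    rw [ae_restrict_iff' measurableSet_Ioc]
    filter_upwards with s hs
    have h1 := h0 s hs; have h2 := hle s hs
    rw [Real.norm_eq_abs, Real.norm_eq_abs, abs_of_nonneg h1]
    exact le_trans h2 (le_abs_self _)
  refine ⟨(intervalIntegrable_iff_integrableOn_Ioc_of_le hab).mpr hfi, ?_⟩
  rw [intervalIntegral.integral_of_le hab, intervalIntegral.integral_of_le hab]
  exact setIntegral_mono_on hfi hgi measurableSet_Ioc hle

private lemma measF (ρ lam t a b : ℝ) (ha : 0 ≤ a) (hb : b ≤ t) :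
    AEStronglyMeasurable
      (fun s => (min (t - s) 1) ^ (-(1 / 2 : ℝ)) * Real.exp (-lam * (t - s)) *
        (min s 1) ^ (-(ρ + 1 / 2))) (volume.restrict (Set.Ioc a b)) := by
  have hcont : ContinuousOn
      (fun s => (min (t - s) 1) ^ (-(1 / 2 : ℝ)) * Real.exp (-lam * (t - s)) *
        (min s 1) ^ (-(ρ + 1 / 2))) (Set.Ioo 0 t) := by
    refine ContinuousOn.mul (ContinuousOn.mul ?_ ?_) ?_
    · refine ContinuousOn.rpow_const
        (((continuous_const.sub continuous_id).min continuous_const).continuousOn) ?_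
      intro x hx
      exact Or.inl (ne_of_gt (lt_min (by linarith [hx.2]) one_pos))
    · exact ((continuous_const.mul (continuous_const.sub continuous_id)).rexp).continuousOn
    · refine ContinuousOn.rpow_const ((continuous_id.min continuous_const).continuousOn) ?_
      intro x hx
      exact Or.inl (ne_of_gt (lt_min hx.1 one_pos))
  have h1 : AEStronglyMeasurable _ (volume.restrict (Set.Ioo 0 t)) := hcont.aestronglyMeasurable measurableSet_Ioo
  rw [← Measure.restrict_congr_set Ioo_ae_eq_Ioc]
  exact h1.mono_measure (Measure.restrict_mono (Set.Ioo_subset_Ioo ha hb) le_rfl)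

example : True := trivial

open intervalIntegral in
private lemma int_rpow_zero {b p : ℝ} (hp : (-1:ℝ) < p) (hb : 0 ≤ b) :
    ∫ s in (0:ℝ)..b, s ^ p = b ^ (p + 1) / (p + 1) := by
  rw [integral_rpow (Or.inl hp), Real.zero_rpow (by linarith), sub_zero]

open intervalIntegral in
private lemma int_tsub {t a : ℝ} (ha : a ≤ t) :
    ∫ s in a..t, (t - s) ^ (-(1/2:ℝ)) = 2 * (t - a) ^ (1/2:ℝ) := by
  rw [intervalIntegral.integral_comp_sub_left (fun u => u ^ (-(1/2:ℝ))) t]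
  simp only [sub_self]
  rw [int_rpow_zero (by norm_num) (by linarith)]
  have h : (-(1/2:ℝ) + 1) = 1/2 := by norm_num
  rw [h]; ring

private lemma ii_tsub {t a : ℝ} :
    IntervalIntegrable (fun s => (t - s) ^ (-(1/2:ℝ))) volume a t := by
  have h := (intervalIntegral.intervalIntegrable_rpow'
      (show (-1:ℝ) < -(1/2) by norm_num) (a := t - a) (b := t - t)).comp_sub_left t
  simpa using h

open intervalIntegral in
private lemma int_exp_le {lam t a b : ℝ} (hlam : 0 < lam) (hab : a ≤ b) (hbt : b ≤ t) :
    ∫ s in a..b, Real.exp (-lam * (t - s)) ≤ 1 / lam := by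
  have h1 : (fun s => Real.exp (-lam * (t - s)))
      = fun s => Real.exp (-(lam * t)) * Real.exp (lam * s) := by
    funext s; rw [← Real.exp_add]; ring_nf
  rw [h1, intervalIntegral.integral_const_mul]
  have h2 : (∫ s in a..b, Real.exp (lam * s))
      = lam⁻¹ • ∫ x in lam*a..lam*b, Real.exp x :=
    intervalIntegral.integral_comp_mul_left Real.exp (ne_of_gt hlam)
  rw [h2, integral_exp, smul_eq_mul]
  have h4 : Real.exp (-(lam*t)) * Real.exp (lam*b) = Real.exp (lam*b - lam*t) := by
    rw [← Real.exp_add]; ring_nf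
  have h5 : Real.exp (lam*b - lam*t) ≤ 1 := Real.exp_le_one_iff.mpr (by nlinarith)
  have h3 : Real.exp (-(lam*t)) * (Real.exp (lam*b) - Real.exp (lam*a)) ≤ 1 := by
    nlinarith [Real.exp_pos (-(lam*t)), Real.exp_pos (lam*a)]
  have hinv : (0:ℝ) < lam⁻¹ := inv_pos.mpr hlam
  have h6 := mul_le_mul_of_nonneg_left h3 hinv.le
  rw [one_div]; nlinarith

private lemma rpow_half_le {e : ℝ} (h0 : 0 ≤ e) (h1 : e ≤ 1) : ((1:ℝ)/2) ^ (-e) ≤ 2 := by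
  have h2 : ((1:ℝ)/2) ^ (-e) = 2 ^ e := by
    rw [one_div, Real.inv_rpow (by norm_num), Real.rpow_neg (by norm_num), inv_inv]
  rw [h2]
  calc (2:ℝ)^e ≤ (2:ℝ)^(1:ℝ) := Real.rpow_le_rpow_of_exponent_le one_le_two h1
  _ = 2 := Real.rpow_one 2

private lemma rpow_quarter_le {e : ℝ} (h0 : 0 ≤ e) (h1 : e ≤ 1) : ((1:ℝ)/4) ^ (-e) ≤ 4 := by
  have h2 : ((1:ℝ)/4) ^ (-e) = 4 ^ e := by
    rw [one_div, Real.inv_rpow (by norm_num), Real.rpow_neg (by norm_num), inv_inv]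
  rw [h2]
  calc (4:ℝ)^e ≤ (4:ℝ)^(1:ℝ) := Real.rpow_le_rpow_of_exponent_le (by norm_num) h1
  _ = 4 := Real.rpow_one 4

private lemma half_rpow {t ρ : ℝ} (ht : 0 < t) (hρ0 : 0 < ρ) (hρ1 : ρ ≤ 1) :
    (t/2) ^ (-ρ) ≤ 2 * t ^ (-ρ) := by
  have h2 : ((2:ℝ)⁻¹) ^ (-ρ) = 2 ^ ρ := by
    rw [Real.inv_rpow (by norm_num), Real.rpow_neg (by norm_num), inv_inv]
  have h1 : (t/2) ^ (-ρ) = t^(-ρ) * (2:ℝ)^ρ := by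
    rw [div_eq_mul_inv, Real.mul_rpow ht.le (by norm_num), h2]
  have h3 : (2:ℝ)^ρ ≤ 2 := by
    calc (2:ℝ)^ρ ≤ (2:ℝ)^(1:ℝ) := Real.rpow_le_rpow_of_exponent_le one_le_two hρ1
    _ = 2 := Real.rpow_one 2
  have h4 : (0:ℝ) ≤ t^(-ρ) := Real.rpow_nonneg ht.le _
  rw [h1]; nlinarith

private lemma exp_mul_le {lam t : ℝ} (hlam : 0 < lam) (ht : 0 ≤ t) :
    Real.exp (-(lam*t)/2) * t ≤ 2 / lam := by
  have h1 := Real.add_one_le_exp (lam*t/2)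
  have h2 : Real.exp (-(lam*t)/2) = (Real.exp (lam*t/2))⁻¹ := by
    rw [← Real.exp_neg]; ring_nf
  have h3 := Real.exp_pos (lam*t/2)
  rw [h2, le_div_iff₀ hlam]
  have h4 : lam * t ≤ 2 * Real.exp (lam*t/2) := by nlinarith
  have h5 : (0:ℝ) ≤ (Real.exp (lam*t/2))⁻¹ := (inv_pos.mpr h3).le
  have h6 := mul_le_mul_of_nonneg_right h4 h5
  have h7 : Real.exp (lam*t/2) * (Real.exp (lam*t/2))⁻¹ = 1 := mul_inv_cancel₀ (ne_of_gt h3)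
  nlinarith

private lemma case_small {ρ lam : ℝ} (hρ0 : 0 < ρ) (hρ4 : ρ < 1/4) (hlam : 0 < lam)
    {t : ℝ} (ht : 0 < t) (ht1 : t ≤ 1) :
    (∫ s in (0:ℝ)..t, (min (t - s) 1) ^ (-(1 / 2 : ℝ)) * Real.exp (-lam * (t - s)) *
        (min s 1) ^ (-(ρ + 1 / 2)))
      ≤ (2 / (1/2 - ρ) + 4) * t ^ (-ρ) := by
  set F : ℝ → ℝ := fun s => (min (t - s) 1) ^ (-(1 / 2 : ℝ)) * Real.exp (-lam * (t - s)) *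
      (min s 1) ^ (-(ρ + 1 / 2)) with hF
  have hm : (0:ℝ) ≤ t/2 := by linarith
  have hmt : t/2 ≤ t := by linarith
  have htp : (0:ℝ) < t/2 := by linarith
  have hFnn : ∀ s ∈ Set.Ioc (0:ℝ) t, 0 ≤ F s := by
    intro s hs
    have h1 : (0:ℝ) ≤ min (t-s) 1 := le_min (by linarith [hs.2]) one_pos.le
    have h2 : (0:ℝ) ≤ min s 1 := le_min hs.1.le one_pos.le
    exact mul_nonneg (mul_nonneg (Real.rpow_nonneg h1 _) (Real.exp_pos _).le)
      (Real.rpow_nonneg h2 _)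
  -- piece 1 on [0, t/2]
  have hle1 : ∀ s ∈ Set.Ioc (0:ℝ) (t/2),
      F s ≤ (t/2) ^ (-(1/2:ℝ)) * s ^ (-(ρ + 1/2)) := by
    intro s hs
    have hmin1 : min s 1 = s := min_eq_left (by linarith [hs.2])
    have hA : (min (t-s) 1) ^ (-(1/2:ℝ)) ≤ (t/2) ^ (-(1/2:ℝ)) :=
      Real.rpow_le_rpow_of_nonpos htp (le_min (by linarith [hs.2]) (by linarith)) (by norm_num)
    have hB : Real.exp (-lam*(t-s)) ≤ 1 :=
      Real.exp_le_one_iff.mpr (by nlinarith [hs.2])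
    have hC0 : (0:ℝ) ≤ s ^ (-(ρ + 1/2)) := Real.rpow_nonneg hs.1.le _
    have h1 : (min (t-s) 1) ^ (-(1/2:ℝ)) * Real.exp (-lam*(t-s)) ≤ (t/2) ^ (-(1/2:ℝ)) :=
      le_trans (mul_le_of_le_one_right (Real.rpow_nonneg
        (le_min (by linarith [hs.2]) one_pos.le) _) hB) hA
    calc F s = (min (t-s) 1) ^ (-(1/2:ℝ)) * Real.exp (-lam*(t-s)) * s ^ (-(ρ + 1/2)) := by
          rw [hF]; simp only [hmin1]
    _ ≤ (t/2) ^ (-(1/2:ℝ)) * s ^ (-(ρ + 1/2)) := mul_le_mul_of_nonneg_right h1 hC0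
  have hg1 : IntervalIntegrable (fun s => (t/2) ^ (-(1/2:ℝ)) * s ^ (-(ρ + 1/2)))
      volume 0 (t/2) :=
    (intervalIntegral.intervalIntegrable_rpow' (by linarith)).const_mul _
  have hP1 := bound_int hm (measF ρ lam t 0 (t/2) le_rfl hmt)
    (fun s hs => hFnn s ⟨hs.1, le_trans hs.2 hmt⟩) hle1 hg1
  -- piece 2 on [t/2, t]
  have hle2 : ∀ s ∈ Set.Ioc (t/2) t,
      F s ≤ (t - s) ^ (-(1/2:ℝ)) * (t/2) ^ (-(ρ + 1/2)) := by
    intro s hs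
    have hmin1 : min (t-s) 1 = t - s := min_eq_left (by linarith [hs.1])
    have hA0 : (0:ℝ) ≤ (t-s) ^ (-(1/2:ℝ)) := Real.rpow_nonneg (by linarith [hs.2]) _
    have hB : Real.exp (-lam*(t-s)) ≤ 1 :=
      Real.exp_le_one_iff.mpr (by nlinarith [hs.2])
    have hC : (min s 1) ^ (-(ρ + 1/2)) ≤ (t/2) ^ (-(ρ + 1/2)) :=
      Real.rpow_le_rpow_of_nonpos htp (le_min hs.1.le (by linarith)) (by linarith)
    have hC0 : (0:ℝ) ≤ (min s 1) ^ (-(ρ + 1/2)) :=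
      Real.rpow_nonneg (le_min (by linarith [hs.1]) one_pos.le) _
    calc F s = (t - s) ^ (-(1/2:ℝ)) * Real.exp (-lam*(t-s)) * (min s 1) ^ (-(ρ + 1/2)) := by
          rw [hF]; simp only [hmin1]
    _ ≤ (t - s) ^ (-(1/2:ℝ)) * (min s 1) ^ (-(ρ + 1/2)) :=
        mul_le_mul_of_nonneg_right (mul_le_of_le_one_right hA0 hB) hC0
    _ ≤ (t - s) ^ (-(1/2:ℝ)) * (t/2) ^ (-(ρ + 1/2)) := mul_le_mul_of_nonneg_left hC hA0
  have hg2 : IntervalIntegrable (fun s => (t - s) ^ (-(1/2:ℝ)) * (t/2) ^ (-(ρ + 1/2)))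
      volume (t/2) t := ii_tsub.mul_const _
  have hP2 := bound_int hmt (measF ρ lam t (t/2) t hm le_rfl)
    (fun s hs => hFnn s ⟨lt_trans htp hs.1, hs.2⟩) hle2 hg2
  -- values
  have hv1 : (∫ s in (0:ℝ)..(t/2), (t/2) ^ (-(1/2:ℝ)) * s ^ (-(ρ + 1/2)))
      = (t/2) ^ (-ρ) / (1/2 - ρ) := by
    rw [intervalIntegral.integral_const_mul, int_rpow_zero (by linarith) hm]
    have he : (-(ρ + 1/2) + 1) = 1/2 - ρ := by ring
    rw [he, ← mul_div_assoc, ← Real.rpow_add htp]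
    have he2 : (-(1/2:ℝ) + (1/2 - ρ)) = -ρ := by ring
    rw [he2]
  have hv2 : (∫ s in (t/2)..t, (t - s) ^ (-(1/2:ℝ)) * (t/2) ^ (-(ρ + 1/2)))
      = 2 * (t/2) ^ (-ρ) := by
    rw [intervalIntegral.integral_mul_const, int_tsub hmt]
    have he : t - t/2 = t/2 := by ring
    rw [he, mul_assoc, ← Real.rpow_add htp]
    have he2 : ((1/2:ℝ) + -(ρ + 1/2)) = -ρ := by ring
    rw [he2]
  -- combine
  have hsplit := intervalIntegral.integral_add_adjacent_intervals hP1.1 hP2.1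
  have hhalf := half_rpow ht hρ0 (by linarith)
  have htnn : (0:ℝ) ≤ t ^ (-ρ) := Real.rpow_nonneg ht.le _
  have hd : (0:ℝ) < 1/2 - ρ := by linarith
  have hb1 : (∫ s in (0:ℝ)..(t/2), F s) ≤ (t/2) ^ (-ρ) / (1/2 - ρ) := by
    rw [← hv1]; exact hP1.2
  have hb2 : (∫ s in (t/2)..t, F s) ≤ 2 * (t/2) ^ (-ρ) := by
    rw [← hv2]; exact hP2.2
  have hfin : (∫ s in (0:ℝ)..t, F s) ≤ (t/2) ^ (-ρ) / (1/2 - ρ) + 2 * (t/2) ^ (-ρ) := by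
    rw [← hsplit]; exact add_le_add hb1 hb2
  have h9 : (t/2) ^ (-ρ) / (1/2 - ρ) ≤ 2 * t ^ (-ρ) / (1/2 - ρ) := by
    rw [div_eq_mul_inv, div_eq_mul_inv]
    exact mul_le_mul_of_nonneg_right hhalf (inv_nonneg.mpr hd.le)
  calc (∫ s in (0:ℝ)..t, F s) ≤ (t/2) ^ (-ρ) / (1/2 - ρ) + 2 * (t/2) ^ (-ρ) := hfin
  _ ≤ 2 * t ^ (-ρ) / (1/2 - ρ) + 2 * (2 * t ^ (-ρ)) := by
      refine add_le_add h9 (by nlinarith)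
  _ = (2 / (1/2 - ρ) + 4) * t ^ (-ρ) := by ring

set_option maxHeartbeats 1000000 in
private lemma case_big {ρ lam : ℝ} (hρ0 : 0 < ρ) (hρ4 : ρ < 1/4) (hlam : 0 < lam)
    {t : ℝ} (ht1 : 1 < t) :
    (∫ s in (0:ℝ)..t, (min (t - s) 1) ^ (-(1 / 2 : ℝ)) * Real.exp (-lam * (t - s)) *
        (min s 1) ^ (-(ρ + 1 / 2)))
      ≤ 4 + 4 / (lam * (1/2 - ρ)) + 12 / lam := by
  set F : ℝ → ℝ := fun s => (min (t - s) 1) ^ (-(1 / 2 : ℝ)) * Real.exp (-lam * (t - s)) *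
      (min s 1) ^ (-(ρ + 1 / 2)) with hF
  have ht : (0:ℝ) < t := by linarith
  set a : ℝ := t - 1/2 with ha
  set m : ℝ := t/2 - 1/4 with hm
  clear_value a m
  have hma : m = a/2 := by rw [hm, ha]; ring
  have hm0 : (0:ℝ) < m := by rw [hm]; linarith
  have hmq : (1:ℝ)/4 ≤ m := by rw [hm]; linarith
  have hmam : m ≤ a := by rw [hm, ha]; linarith
  have hat : a ≤ t := by rw [ha]; linarith
  have ha0 : (0:ℝ) < a := by rw [ha]; linarith
  have hre : (0:ℝ) < ρ + 1/2 := by linarith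
  have hre1 : ρ + 1/2 ≤ 1 := by linarith
  have hFnn : ∀ s ∈ Set.Ioc (0:ℝ) t, 0 ≤ F s := by
    intro s hs
    have h1 : (0:ℝ) ≤ min (t-s) 1 := le_min (by linarith [hs.2]) one_pos.le
    have h2 : (0:ℝ) ≤ min s 1 := le_min hs.1.le one_pos.le
    exact mul_nonneg (mul_nonneg (Real.rpow_nonneg h1 _) (Real.exp_pos _).le)
      (Real.rpow_nonneg h2 _)
  -- generic: on s ≤ a, first factor ≤ 2
  have hAle : ∀ s : ℝ, s ≤ a → (min (t-s) 1) ^ (-(1/2:ℝ)) ≤ 2 := by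
    intro s hs
    have h1 : (1:ℝ)/2 ≤ min (t-s) 1 := le_min (by rw [ha] at hs; linarith) (by norm_num)
    calc (min (t-s) 1) ^ (-(1/2:ℝ)) ≤ ((1:ℝ)/2) ^ (-(1/2:ℝ)) :=
        Real.rpow_le_rpow_of_nonpos (by norm_num) h1 (by norm_num)
    _ ≤ 2 := rpow_half_le (by norm_num) (by norm_num)
  -- piece 4 on [0, m]
  have hle4 : ∀ s ∈ Set.Ioc (0:ℝ) m,
      F s ≤ 2 * Real.exp (-(lam*t)/2) * (s ^ (-(ρ + 1/2)) + 1) := by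
    intro s hs
    have hA := hAle s (le_trans hs.2 hmam)
    have hA0 : (0:ℝ) ≤ (min (t-s) 1) ^ (-(1/2:ℝ)) :=
      Real.rpow_nonneg (le_min (by rw [hm] at hs; linarith [hs.2]) one_pos.le) _
    have hB : Real.exp (-lam*(t-s)) ≤ Real.exp (-(lam*t)/2) := by
      apply Real.exp_le_exp.mpr
      rw [hm] at hs
      nlinarith [hs.2]
    have hC : (min s 1) ^ (-(ρ + 1/2)) ≤ s ^ (-(ρ + 1/2)) + 1 := by
      rcases le_or_gt s 1 with h | h
      · rw [min_eq_left h]; linarith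
      · rw [min_eq_right h.le, Real.one_rpow]
        have := Real.rpow_nonneg (le_of_lt (lt_trans one_pos h)) (-(ρ + 1/2))
        linarith
    have hC0 : (0:ℝ) ≤ (min s 1) ^ (-(ρ + 1/2)) :=
      Real.rpow_nonneg (le_min hs.1.le one_pos.le) _
    have h1 : (min (t-s) 1) ^ (-(1/2:ℝ)) * Real.exp (-lam*(t-s))
        ≤ 2 * Real.exp (-(lam*t)/2) :=
      mul_le_mul hA hB (Real.exp_pos _).le (by norm_num)
    exact mul_le_mul h1 hC hC0 (by positivity)
  have hg4 : IntervalIntegrable (fun s => 2 * Real.exp (-(lam*t)/2) * (s ^ (-(ρ + 1/2)) + 1))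
      volume 0 m :=
    ((intervalIntegral.intervalIntegrable_rpow' (by linarith)).add
      intervalIntegrable_const).const_mul _
  have hP4 := bound_int hm0.le (measF ρ lam t 0 m le_rfl (le_trans hmam hat))
    (fun s hs => hFnn s ⟨hs.1, le_trans hs.2 (le_trans hmam hat)⟩) hle4 hg4
  -- piece 5 on [m, a]
  have hle5 : ∀ s ∈ Set.Ioc m a, F s ≤ 8 * Real.exp (-lam * (t - s)) := by
    intro s hs
    have hA := hAle s hs.2
    have hC : (min s 1) ^ (-(ρ + 1/2)) ≤ 4 := by
      have h1 : (1:ℝ)/4 ≤ min s 1 := le_min (by linarith [hs.1, hmq]) (by norm_num)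
      calc (min s 1) ^ (-(ρ + 1/2)) ≤ ((1:ℝ)/4) ^ (-(ρ + 1/2)) :=
          Real.rpow_le_rpow_of_nonpos (by norm_num) h1 (by linarith)
      _ ≤ 4 := rpow_quarter_le hre.le hre1
    have hC0 : (0:ℝ) ≤ (min s 1) ^ (-(ρ + 1/2)) :=
      Real.rpow_nonneg (le_min (by linarith [hs.1, hm0]) one_pos.le) _
    have hA0 : (0:ℝ) ≤ (min (t-s) 1) ^ (-(1/2:ℝ)) :=
      Real.rpow_nonneg (le_min (by linarith [hs.2, hat]) one_pos.le) _
    have h1 : (min (t-s) 1) ^ (-(1/2:ℝ)) * Real.exp (-lam*(t-s))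
        ≤ 2 * Real.exp (-lam*(t-s)) :=
      mul_le_mul_of_nonneg_right hA (Real.exp_pos _).le
    calc F s ≤ 2 * Real.exp (-lam*(t-s)) * 4 := mul_le_mul h1 hC hC0 (by positivity)
    _ = 8 * Real.exp (-lam * (t - s)) := by ring
  have hg5 : IntervalIntegrable (fun s => 8 * Real.exp (-lam * (t - s))) volume m a :=
    (Continuous.intervalIntegrable (continuous_const.mul
      ((continuous_const.mul (continuous_const.sub continuous_id)).rexp)) _ _)
  have hP5 := bound_int hmam (measF ρ lam t m a hm0.le hat)
    (fun s hs => hFnn s ⟨lt_of_lt_of_le hm0 hs.1.le, le_trans hs.2 hat⟩) hle5 hg5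
  -- piece 3 on [a, t]
  have hle3 : ∀ s ∈ Set.Ioc a t, F s ≤ 2 * (t - s) ^ (-(1/2:ℝ)) := by
    intro s hs
    have hmin1 : min (t-s) 1 = t - s := min_eq_left (by rw [ha] at hs; linarith [hs.1])
    have hA0 : (0:ℝ) ≤ (t-s) ^ (-(1/2:ℝ)) := Real.rpow_nonneg (by linarith [hs.2]) _
    have hB : Real.exp (-lam*(t-s)) ≤ 1 :=
      Real.exp_le_one_iff.mpr (by nlinarith [hs.2])
    have hC : (min s 1) ^ (-(ρ + 1/2)) ≤ 2 := by
      have h1 : (1:ℝ)/2 ≤ min s 1 := le_min (by rw [ha] at hs; linarith [hs.1]) (by norm_num)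
      calc (min s 1) ^ (-(ρ + 1/2)) ≤ ((1:ℝ)/2) ^ (-(ρ + 1/2)) :=
          Real.rpow_le_rpow_of_nonpos (by norm_num) h1 (by linarith)
      _ ≤ 2 := rpow_half_le hre.le hre1
    have hC0 : (0:ℝ) ≤ (min s 1) ^ (-(ρ + 1/2)) :=
      Real.rpow_nonneg (le_min (by rw [ha] at hs; linarith [hs.1]) one_pos.le) _
    calc F s = (t - s) ^ (-(1/2:ℝ)) * Real.exp (-lam*(t-s)) * (min s 1) ^ (-(ρ + 1/2)) := by
          rw [hF]; simp only [hmin1]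
    _ ≤ (t - s) ^ (-(1/2:ℝ)) * (min s 1) ^ (-(ρ + 1/2)) :=
        mul_le_mul_of_nonneg_right (mul_le_of_le_one_right hA0 hB) hC0
    _ ≤ (t - s) ^ (-(1/2:ℝ)) * 2 := mul_le_mul_of_nonneg_left hC hA0
    _ = 2 * (t - s) ^ (-(1/2:ℝ)) := by ring
  have hg3 : IntervalIntegrable (fun s => 2 * (t - s) ^ (-(1/2:ℝ))) volume a t :=
    ii_tsub.const_mul _
  have hP3 := bound_int hat (measF ρ lam t a t ha0.le le_rfl)
    (fun s hs => hFnn s ⟨lt_trans ha0 hs.1, hs.2⟩) hle3 hg3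
  -- bound values
  have hd : (0:ℝ) < 1/2 - ρ := by linarith
  have hb4 : (∫ s in (0:ℝ)..m, F s) ≤ 4 / (lam * (1/2 - ρ)) + 4 / lam := by
    refine le_trans hP4.2 ?_
    rw [intervalIntegral.integral_const_mul,
      intervalIntegral.integral_add
        (intervalIntegral.intervalIntegrable_rpow' (by linarith)) intervalIntegrable_const,
      int_rpow_zero (by linarith) hm0.le, intervalIntegral.integral_const, smul_eq_mul,
      sub_zero, mul_one]
    have he : (-(ρ + 1/2) + 1) = 1/2 - ρ := by ring
    rw [he]
    have h1 : m ^ (1/2 - ρ) ≤ t := by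
      calc m ^ (1/2 - ρ) ≤ t ^ (1/2 - ρ) :=
          Real.rpow_le_rpow hm0.le (le_trans hmam hat) hd.le
      _ ≤ t ^ (1:ℝ) := Real.rpow_le_rpow_of_exponent_le ht1.le (by linarith)
      _ = t := Real.rpow_one t
    have h2 : m ≤ t := le_trans hmam hat
    have hE : (0:ℝ) < Real.exp (-(lam*t)/2) := Real.exp_pos _
    have hEt : Real.exp (-(lam*t)/2) * t ≤ 2 / lam := exp_mul_le hlam ht.le
    have hq1 : m ^ (1/2 - ρ) / (1/2 - ρ) ≤ t / (1/2 - ρ) := by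
      rw [div_eq_mul_inv, div_eq_mul_inv]
      exact mul_le_mul_of_nonneg_right h1 (inv_nonneg.mpr hd.le)
    have hsum : m ^ (1/2 - ρ) / (1/2 - ρ) + m ≤ t / (1/2 - ρ) + t := add_le_add hq1 h2
    calc 2 * Real.exp (-(lam*t)/2) * (m ^ (1/2 - ρ) / (1/2 - ρ) + m)
        ≤ 2 * Real.exp (-(lam*t)/2) * (t / (1/2 - ρ) + t) :=
          mul_le_mul_of_nonneg_left hsum (by positivity)
    _ = (2/(1/2 - ρ)) * (Real.exp (-(lam*t)/2) * t) + 2 * (Real.exp (-(lam*t)/2) * t) := by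
          field_simp
    _ ≤ (2/(1/2 - ρ)) * (2/lam) + 2 * (2/lam) := by
          refine add_le_add (mul_le_mul_of_nonneg_left hEt (by positivity))
            (mul_le_mul_of_nonneg_left hEt (by norm_num))
    _ = 4 / (lam * (1/2 - ρ)) + 4 / lam := by
          field_simp; ring
  have hb5 : (∫ s in m..a, F s) ≤ 8 / lam := by
    refine le_trans hP5.2 ?_
    rw [intervalIntegral.integral_const_mul]
    have h1 := int_exp_le hlam hmam hat
    calc 8 * ∫ s in m..a, Real.exp (-lam * (t - s)) ≤ 8 * (1/lam) :=
        mul_le_mul_of_nonneg_left h1 (by norm_num)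
    _ = 8 / lam := by ring
  have hb3 : (∫ s in a..t, F s) ≤ 4 := by
    refine le_trans hP3.2 ?_
    rw [intervalIntegral.integral_const_mul, int_tsub hat]
    have h0 : t - a = 1/2 := by rw [ha]; ring
    rw [h0]
    have h1 : ((1:ℝ)/2) ^ (1/2:ℝ) ≤ 1 :=
      Real.rpow_le_one (by norm_num) (by norm_num) (by norm_num)
    nlinarith [Real.rpow_nonneg (show (0:ℝ) ≤ 1/2 by norm_num) (1/2:ℝ)]
  have hsplit1 := intervalIntegral.integral_add_adjacent_intervals hP4.1 hP5.1
  have hsplit2 := intervalIntegral.integral_add_adjacent_intervals (hP4.1.trans hP5.1) hP3.1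
  have : (∫ s in (0:ℝ)..t, F s) = (∫ s in (0:ℝ)..m, F s) + (∫ s in m..a, F s)
      + (∫ s in a..t, F s) := by
    rw [← hsplit2, ← hsplit1]
  rw [this]
  calc (∫ s in (0:ℝ)..m, F s) + (∫ s in m..a, F s) + (∫ s in a..t, F s)
      ≤ (4 / (lam * (1/2 - ρ)) + 4 / lam) + 8 / lam + 4 :=
        add_le_add (add_le_add hb4 hb5) hb3
  _ = 4 + 4 / (lam * (1/2 - ρ)) + 12 / lam := by ring

/-- Beta-type convolution estimate with exponential damping:
`∫₀^t ((t-s)∧1)^{-1/2} e^{-λ(t-s)} (s∧1)^{-(ρ+1/2)} ds ≤ c (t∧1)^{-ρ}` for all `t > 0`. -/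
theorem stmt19 (ρ lam : ℝ) (hρ : ρ ∈ Set.Ioo (0 : ℝ) (1 / 4)) (hlam : 0 < lam) :
    ∃ c : ℝ, 0 < c ∧ ∀ t : ℝ, 0 < t →
      (∫ s in (0 : ℝ)..t,
          (min (t - s) 1) ^ (-(1 / 2 : ℝ)) * Real.exp (-lam * (t - s)) *
            (min s 1) ^ (-(ρ + 1 / 2)))
        ≤ c * (min t 1) ^ (-ρ) := by
  obtain ⟨hρ0, hρ4⟩ := hρ
  have hd : (0:ℝ) < 1/2 - ρ := by linarith
  refine ⟨(2 / (1/2 - ρ) + 4) + (4 + 4 / (lam * (1/2 - ρ)) + 12 / lam), by positivity, ?_⟩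
  intro t ht
  have hc2 : (0:ℝ) ≤ 4 + 4 / (lam * (1/2 - ρ)) + 12 / lam := by positivity
  have hc1 : (0:ℝ) ≤ 2 / (1/2 - ρ) + 4 := by positivity
  rcases le_or_gt t 1 with ht1 | ht1
  · rw [min_eq_left ht1]
    have h := case_small hρ0 hρ4 hlam ht ht1
    have h2 : (0:ℝ) ≤ t ^ (-ρ) := Real.rpow_nonneg ht.le _
    nlinarith
  · rw [min_eq_right ht1.le, Real.one_rpow, mul_one]
    have h := case_big hρ0 hρ4 hlam ht1
    linarith
end
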